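/- arXiv:1103.1277 — 2 statements merged into one kernel-verified Lean document; each statement's English description precedes it below -/
import Mathlib

section
/- Let n ≥ 1, T > 0, and let f, p : ℝⁿ × [0,T] → ℝ be smooth. Set F(x,t) = (1/2)(p(x,t) − f(x,t)). Suppose G : ℝⁿ × [0,T] → ℝ is smooth, everywhere strictly positive, and satisfies ∂ₜG(x,t) = ΔG(x,t) + F(x,t)·G(x,t) for all (x,t) ∈ ℝⁿ × (0,T). Then the vector field u(x,t) = −2·∇G(x,t)/G(x,t) satisfies the Navier–Stokes equation with gradient forcing, ∂ₜu + (u·∇)u = Δu + ∇(f − p), at every point of ℝⁿ × (0,T). -/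
open MeasureTheory Real

noncomputable section

abbrev E (n : ℕ) := EuclideanSpace ℝ (Fin n)

/-- The heat kernel on ℝⁿ. -/
def heatK (n : ℕ) (x : E n) (t : ℝ) : ℝ :=
  (4 * Real.pi * t) ^ (-(n : ℝ) / 2) * Real.exp (-‖x‖ ^ 2 / (4 * t))

/-- Spatial convolution. -/
def conv (n : ℕ) (f g : E n → ℝ) (x : E n) : ℝ := ∫ y, f (x - y) * g y

/-- The i-th spatial partial derivative. -/
def pd (n : ℕ) (f : E n → ℝ) (i : Fin n) (x : E n) : ℝ :=
  fderiv ℝ f x (EuclideanSpace.single i 1)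

/-- The spatial Laplacian. -/
def lap (n : ℕ) (f : E n → ℝ) (x : E n) : ℝ := ∑ i, pd n (pd n f i) i x

section helpers
variable {n : ℕ}

lemma contDiff_pd {h : E n → ℝ} (hh : ContDiff ℝ (⊤ : ℕ∞) h) (i : Fin n) :
    ContDiff ℝ (⊤ : ℕ∞) (pd n h i) := by
  have h1 : ContDiff ℝ (⊤ : ℕ∞) (fderiv ℝ h) := hh.fderiv_right (by simp)
  exact h1.clm_apply contDiff_const

lemma pd_hasFDerivAt {h : E n → ℝ} (hh : ContDiff ℝ (⊤ : ℕ∞) h) (i : Fin n) (x : E n) :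
    HasFDerivAt (pd n h i)
      ((ContinuousLinearMap.apply ℝ ℝ (EuclideanSpace.single i 1)).comp
        (fderiv ℝ (fderiv ℝ h) x)) x := by
  have h1 : ContDiff ℝ (⊤ : ℕ∞) (fderiv ℝ h) := hh.fderiv_right (by simp)
  have h2 : HasFDerivAt (fderiv ℝ h) (fderiv ℝ (fderiv ℝ h) x) x :=
    (h1.differentiable (by simp) x).hasFDerivAt
  exact ((ContinuousLinearMap.apply ℝ ℝ (EuclideanSpace.single i 1)).hasFDerivAt).comp x h2

lemma pd_pd {h : E n → ℝ} (hh : ContDiff ℝ (⊤ : ℕ∞) h) (i j : Fin n) (x : E n) :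
    pd n (pd n h i) j x =
      fderiv ℝ (fderiv ℝ h) x (EuclideanSpace.single j 1) (EuclideanSpace.single i 1) := by
  rw [pd, (pd_hasFDerivAt hh i x).fderiv]; rfl

lemma pd_comm {h : E n → ℝ} (hh : ContDiff ℝ (⊤ : ℕ∞) h) (i j : Fin n) (x : E n) :
    pd n (pd n h i) j x = pd n (pd n h j) i x := by
  have hd : ∀ y, HasFDerivAt h (fderiv ℝ h y) y :=
    fun y => (hh.differentiable (by simp) y).hasFDerivAt
  have h2 : HasFDerivAt (fderiv ℝ h) (fderiv ℝ (fderiv ℝ h) x) x :=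
    ((hh.fderiv_right (m := (⊤ : ℕ∞)) (by simp)).differentiable (by simp) x).hasFDerivAt
  rw [pd_pd hh i j x, pd_pd hh j i x]
  exact second_derivative_symmetric hd h2 _ _

lemma pd_add {a b : E n → ℝ} {x : E n} (ha : DifferentiableAt ℝ a x)
    (hb : DifferentiableAt ℝ b x) (i : Fin n) :
    pd n (fun y => a y + b y) i x = pd n a i x + pd n b i x := by
  unfold pd
  rw [fderiv_fun_add ha hb]; rfl

lemma pd_sub {a b : E n → ℝ} {x : E n} (ha : DifferentiableAt ℝ a x)
    (hb : DifferentiableAt ℝ b x) (i : Fin n) :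
    pd n (fun y => a y - b y) i x = pd n a i x - pd n b i x := by
  unfold pd
  rw [fderiv_fun_sub ha hb]; rfl

lemma pd_const_mul {a : E n → ℝ} {x : E n} (ha : DifferentiableAt ℝ a x) (c : ℝ) (i : Fin n) :
    pd n (fun y => c * a y) i x = c * pd n a i x := by
  unfold pd
  rw [fderiv_const_mul ha c]; rfl

lemma pd_mul {a b : E n → ℝ} {x : E n} (ha : DifferentiableAt ℝ a x)
    (hb : DifferentiableAt ℝ b x) (i : Fin n) :
    pd n (fun y => a y * b y) i x = pd n a i x * b x + a x * pd n b i x := by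
  unfold pd
  rw [fderiv_fun_mul ha hb]
  simp only [ContinuousLinearMap.add_apply, ContinuousLinearMap.smul_apply, smul_eq_mul]
  ring

lemma pd_sum {ι : Type*} {s : Finset ι} {a : ι → E n → ℝ} {x : E n}
    (ha : ∀ k ∈ s, DifferentiableAt ℝ (a k) x) (i : Fin n) :
    pd n (fun y => ∑ k ∈ s, a k y) i x = ∑ k ∈ s, pd n (a k) i x := by
  unfold pd
  rw [fderiv_fun_sum ha]; simp

lemma pd_div {a b : E n → ℝ} {x : E n} (ha : DifferentiableAt ℝ a x)
    (hb : DifferentiableAt ℝ b x) (hbx : b x ≠ 0) (i : Fin n) :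
    pd n (fun y => a y / b y) i x = (pd n a i x * b x - a x * pd n b i x) / b x ^ 2 := by
  have hinv : HasFDerivAt (fun y => (b y)⁻¹) ((-(b x ^ 2)⁻¹) • fderiv ℝ b x) x :=
    (hasDerivAt_inv hbx).comp_hasFDerivAt x hb.hasFDerivAt
  have hmul := ha.hasFDerivAt.mul hinv
  have heval : pd n (fun y => a y / b y) i x
      = (a x • ((-(b x ^ 2)⁻¹) • fderiv ℝ b x) + (b x)⁻¹ • fderiv ℝ a x)
          (EuclideanSpace.single i 1) := by
    unfold pd
    congr 1
    have hfun : (fun y => a y / b y) = fun y => a y * (b y)⁻¹ := by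
      funext y; rw [div_eq_mul_inv]
    rw [hfun]
    exact hmul.fderiv
  rw [heval]
  simp only [ContinuousLinearMap.add_apply, ContinuousLinearMap.smul_apply, smul_eq_mul]
  unfold pd
  field_simp
  ring

end helpers

section joint
variable {n : ℕ} {Φ : E n × ℝ → ℝ}

lemma incl_hasFDerivAt (t : ℝ) (x : E n) :
    HasFDerivAt (fun y : E n => (y, t))
      ((ContinuousLinearMap.id ℝ (E n)).prod 0) x :=
  HasFDerivAt.prodMk (hasFDerivAt_id x) (hasFDerivAt_const t x)

lemma inct_hasDerivAt (x : E n) (t : ℝ) :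
    HasDerivAt (fun τ : ℝ => (x, τ)) ((0 : E n), (1 : ℝ)) t :=
  HasDerivAt.prodMk (hasDerivAt_const t x) (hasDerivAt_id t)

lemma slice_hasFDerivAt (hΦ : ContDiff ℝ (⊤ : ℕ∞) Φ) (t : ℝ) (x : E n) :
    HasFDerivAt (fun y : E n => Φ (y, t))
      ((fderiv ℝ Φ (x, t)).comp ((ContinuousLinearMap.id ℝ (E n)).prod 0)) x :=
  ((hΦ.differentiable (by simp) (x, t)).hasFDerivAt).comp x (incl_hasFDerivAt t x)

lemma tslice_hasDerivAt (hΦ : ContDiff ℝ (⊤ : ℕ∞) Φ) (x : E n) (t : ℝ) :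
    HasDerivAt (fun τ => Φ (x, τ)) (fderiv ℝ Φ (x, t) (0, 1)) t :=
  ((hΦ.differentiable (by simp) (x, t)).hasFDerivAt).comp_hasDerivAt t (inct_hasDerivAt x t)

lemma mixed_hasDerivAt (hΦ : ContDiff ℝ (⊤ : ℕ∞) Φ) (x : E n) (t : ℝ) (v : E n × ℝ) :
    HasDerivAt (fun τ => fderiv ℝ Φ (x, τ) v)
      (fderiv ℝ (fderiv ℝ Φ) (x, t) (0, 1) v) t := by
  have hA : ContDiff ℝ (⊤ : ℕ∞) (fderiv ℝ Φ) := hΦ.fderiv_right (by simp)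
  have h1 : HasDerivAt (fun τ => fderiv ℝ Φ (x, τ))
      (fderiv ℝ (fderiv ℝ Φ) (x, t) (0, 1)) t :=
    ((hA.differentiable (by simp) (x, t)).hasFDerivAt).comp_hasDerivAt t (inct_hasDerivAt x t)
  have := h1.clm_apply (hasDerivAt_const t v)
  simpa using this

lemma mixed_hasFDerivAt (hΦ : ContDiff ℝ (⊤ : ℕ∞) Φ) (x : E n) (t : ℝ) (v : E n × ℝ) :
    HasFDerivAt (fun y : E n => fderiv ℝ Φ (y, t) v)
      (((ContinuousLinearMap.apply ℝ ℝ v).comp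
        ((fderiv ℝ (fderiv ℝ Φ) (x, t)).comp ((ContinuousLinearMap.id ℝ (E n)).prod 0)))) x := by
  have hA : ContDiff ℝ (⊤ : ℕ∞) (fderiv ℝ Φ) := hΦ.fderiv_right (by simp)
  have h1 : HasFDerivAt (fun y : E n => fderiv ℝ Φ (y, t))
      ((fderiv ℝ (fderiv ℝ Φ) (x, t)).comp ((ContinuousLinearMap.id ℝ (E n)).prod 0)) x :=
    ((hA.differentiable (by simp) (x, t)).hasFDerivAt).comp x (incl_hasFDerivAt t x)
  exact ((ContinuousLinearMap.apply ℝ ℝ v).hasFDerivAt).comp x h1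

lemma joint_symm (hΦ : ContDiff ℝ (⊤ : ℕ∞) Φ) (q : E n × ℝ) (a b : E n × ℝ) :
    fderiv ℝ (fderiv ℝ Φ) q a b = fderiv ℝ (fderiv ℝ Φ) q b a := by
  have hd : ∀ y, HasFDerivAt Φ (fderiv ℝ Φ y) y :=
    fun y => (hΦ.differentiable (by simp) y).hasFDerivAt
  have h2 : HasFDerivAt (fderiv ℝ Φ) (fderiv ℝ (fderiv ℝ Φ) q) q :=
    ((hΦ.fderiv_right (m := (⊤ : ℕ∞)) (by simp)).differentiable (by simp) q).hasFDerivAt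
  exact second_derivative_symmetric hd h2 a b

end joint

lemma gradient_apply {n : ℕ} (h : E n → ℝ) (y : E n) (j : Fin n) :
    (gradient h y) j = fderiv ℝ h y (EuclideanSpace.single j 1) := by
  have h1 : (inner ℝ (gradient h y) (EuclideanSpace.single j (1:ℝ)) : ℝ)
      = fderiv ℝ h y (EuclideanSpace.single j 1) := by
    rw [gradient]
    exact InnerProductSpace.toDual_symm_apply
  rw [← h1, EuclideanSpace.inner_single_right]
  simp

/-- the Cole–Hopf transformation u = -2∇G/G of a positive solution of the
controlled heat equation ∂ₜG = ΔG + F·G, with F = (p-f)/2, solves the Navier–Stokes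
equation with gradient forcing ∂ₜu + (u·∇)u = Δu + ∇(f-p). -/
theorem stmt0 (n : ℕ) (hn : 1 ≤ n) (T : ℝ) (hT : 0 < T)
    (f p : E n → ℝ → ℝ)
    (hf : ContDiff ℝ (⊤ : ℕ∞) fun q : E n × ℝ => f q.1 q.2)
    (hp : ContDiff ℝ (⊤ : ℕ∞) fun q : E n × ℝ => p q.1 q.2)
    (F : E n → ℝ → ℝ) (hF : ∀ x t, F x t = (1 / 2) * (p x t - f x t))
    (G : E n → ℝ → ℝ)
    (hG : ContDiff ℝ (⊤ : ℕ∞) fun q : E n × ℝ => G q.1 q.2)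
    (hGpos : ∀ x t, 0 < G x t)
    (hheat : ∀ x t, 0 < t → t < T →
      deriv (fun τ => G x τ) t = lap n (fun y => G y t) x + F x t * G x t)
    (u : E n → ℝ → E n)
    (hu : ∀ x t, u x t = (-(2 : ℝ) / G x t) • gradient (fun y => G y t) x) :
    ∀ x t, 0 < t → t < T → ∀ i : Fin n,
      deriv (fun τ => u x τ i) t + ∑ j, u x t j * pd n (fun y => u y t i) j x
        = lap n (fun y => u y t i) x + pd n (fun y => f y t - p y t) i x := by
  intro x t ht htT i
  have hGt : ContDiff ℝ (⊤ : ℕ∞) (fun y => G y t) := hG.comp (contDiff_id.prodMk contDiff_const)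
  have hft : ContDiff ℝ (⊤ : ℕ∞) (fun y => f y t) := hf.comp (contDiff_id.prodMk contDiff_const)
  have hpt : ContDiff ℝ (⊤ : ℕ∞) (fun y => p y t) := hp.comp (contDiff_id.prodMk contDiff_const)
  have hFt : ContDiff ℝ (⊤ : ℕ∞) (fun y => F y t) := by
    have e : (fun y => F y t) = fun y => (1/2) * (p y t - f y t) := funext fun y => hF y t
    rw [e]; exact contDiff_const.mul (hpt.sub hft)
  have hGne : ∀ (y : E n) (τ : ℝ), G y τ ≠ 0 := fun y τ => (hGpos y τ).ne'
  have hg : ∀ j : Fin n, ContDiff ℝ (⊤ : ℕ∞) (pd n (fun y => G y t) j) := fun j => contDiff_pd hGt j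
  have hgg : ∀ j k : Fin n, ContDiff ℝ (⊤ : ℕ∞) (pd n (pd n (fun y => G y t) j) k) :=
    fun j k => contDiff_pd (hg j) k
  -- coordinates of u
  have hukey : ∀ (j : Fin n) (y : E n) (τ : ℝ),
      u y τ j = (-2) * pd n (fun z => G z τ) j y / G y τ := by
    intro j y τ
    rw [hu]
    have e : ((-(2:ℝ) / G y τ) • gradient (fun z => G z τ) y) j
        = (-(2:ℝ) / G y τ) * (gradient (fun z => G z τ) y) j := rfl
    rw [e, gradient_apply]
    show (-(2:ℝ) / G y τ) * pd n (fun z => G z τ) j y = _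
    ring
  -- first spatial derivatives of the coordinates of u
  have hpdu : ∀ (j k : Fin n) (y : E n), pd n (fun z => u z t j) k y
      = ((-2) * pd n (pd n (fun z => G z t) j) k y * G y t
          - (-2) * pd n (fun z => G z t) j y * pd n (fun z => G z t) k y) / (G y t) ^ 2 := by
    intro j k y
    have e : (fun z => u z t j) = fun z => ((-2) * pd n (fun w => G w t) j z) / G z t :=
      funext fun z => hukey j z t
    rw [e, pd_div ((contDiff_const.mul (hg j)).differentiable (by simp) y)
        (hGt.differentiable (by simp) y) (hGne y t) k,
      pd_const_mul ((hg j).differentiable (by simp) y) (-2) k]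
  -- symmetry swap for third derivatives
  have hswap : ∀ k : Fin n, pd n (pd n (pd n (fun y => G y t) i) k) k x
      = pd n (pd n (pd n (fun y => G y t) k) k) i x := by
    intro k
    have e1 : pd n (pd n (fun y => G y t) i) k = pd n (pd n (fun y => G y t) k) i :=
      funext fun y => pd_comm hGt i k y
    rw [e1]
    exact pd_comm (hg k) i k x
  -- per-index formula for the Laplacian of u's i-th coordinate
  have hK : ∀ k : Fin n, pd n (pd n (fun y => u y t i) k) k x
      = ((-2) * pd n (pd n (pd n (fun y => G y t) k) k) i x * (G x t) ^ 2
          + 2 * pd n (fun y => G y t) i x * pd n (pd n (fun y => G y t) k) k x * G x t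
          + 4 * pd n (pd n (fun y => G y t) i) k x * pd n (fun y => G y t) k x * G x t
          - 4 * pd n (fun y => G y t) i x * (pd n (fun y => G y t) k x) ^ 2) / (G x t) ^ 3 := by
    intro k
    have e : pd n (fun y => u y t i) k = fun y =>
        ((-2) * pd n (pd n (fun z => G z t) i) k y * G y t
          - (-2) * pd n (fun z => G z t) i y * pd n (fun z => G z t) k y) / (G y t) ^ 2 :=
      funext fun y => hpdu i k y
    have hnumD : ContDiff ℝ (⊤ : ℕ∞) (fun y =>
        (-2) * pd n (pd n (fun z => G z t) i) k y * G y t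
          - (-2) * pd n (fun z => G z t) i y * pd n (fun z => G z t) k y) :=
      ((contDiff_const.mul (hgg i k)).mul hGt).sub ((contDiff_const.mul (hg i)).mul (hg k))
    have hdenD : ContDiff ℝ (⊤ : ℕ∞) (fun y => (G y t) ^ 2) := hGt.pow 2
    rw [e, pd_div (hnumD.differentiable (by simp) x) (hdenD.differentiable (by simp) x)
        (pow_ne_zero 2 (hGne x t)) k]
    rw [pd_sub (((contDiff_const.mul (hgg i k)).mul hGt).differentiable (by simp) x)
        (((contDiff_const.mul (hg i)).mul (hg k)).differentiable (by simp) x) k]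
    rw [pd_mul ((contDiff_const.mul (hgg i k)).differentiable (by simp) x)
        (hGt.differentiable (by simp) x) k]
    rw [pd_mul ((contDiff_const.mul (hg i)).differentiable (by simp) x)
        ((hg k).differentiable (by simp) x) k]
    rw [pd_const_mul ((hgg i k).differentiable (by simp) x) (-2) k]
    rw [pd_const_mul ((hg i).differentiable (by simp) x) (-2) k]
    have e2 : (fun y => (G y t) ^ 2) = fun y => G y t * G y t := by funext y; ring
    rw [e2, pd_mul (hGt.differentiable (by simp) x) (hGt.differentiable (by simp) x) k]
    rw [hswap k]
    have hQ := hGne x t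
    field_simp
    ring
  -- Laplacian of u's i-th coordinate
  have hlap : ∑ k, pd n (pd n (fun y => u y t i) k) k x
      = ((-2) * (∑ k, pd n (pd n (pd n (fun y => G y t) k) k) i x) * (G x t) ^ 2
          + 2 * pd n (fun y => G y t) i x * (∑ k, pd n (pd n (fun y => G y t) k) k x) * G x t
          + 4 * (∑ k, pd n (pd n (fun y => G y t) i) k x * pd n (fun y => G y t) k x) * G x t
          - 4 * pd n (fun y => G y t) i x * (∑ k, (pd n (fun y => G y t) k x) ^ 2))
          / (G x t) ^ 3 := by
    rw [Finset.sum_congr rfl fun k _ => hK k, ← Finset.sum_div]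
    congr 1
    simp only [Finset.mul_sum, Finset.sum_mul, ← Finset.sum_add_distrib,
      ← Finset.sum_sub_distrib]
    exact Finset.sum_congr rfl fun k _ => by ring
  -- convection term
  have hconv : ∑ j, u x t j * pd n (fun y => u y t i) j x
      = (4 * (∑ j, pd n (pd n (fun y => G y t) i) j x * pd n (fun y => G y t) j x) * G x t
          - 4 * pd n (fun y => G y t) i x * (∑ j, (pd n (fun y => G y t) j x) ^ 2))
          / (G x t) ^ 3 := by
    have h1 : ∀ j : Fin n, u x t j * pd n (fun y => u y t i) j x
        = (4 * (pd n (pd n (fun y => G y t) i) j x * pd n (fun y => G y t) j x) * G x t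
            - 4 * pd n (fun y => G y t) i x * (pd n (fun y => G y t) j x) ^ 2) / (G x t) ^ 3 := by
      intro j
      rw [hukey j x t, hpdu i j x]
      have hQ := hGne x t
      field_simp
      ring
    rw [Finset.sum_congr rfl fun j _ => h1 j, ← Finset.sum_div]
    congr 1
    simp only [Finset.mul_sum, Finset.sum_mul, ← Finset.sum_sub_distrib]
  -- forcing term
  have hforce : pd n (fun y => f y t - p y t) i x = (-2) * pd n (fun y => F y t) i x := by
    have e : (fun y => F y t) = fun y => (1/2) * (p y t - f y t) := funext fun y => hF y t
    rw [e, pd_const_mul ((hpt.sub hft).differentiable (by simp) x) (1/2) i,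
      pd_sub (hpt.differentiable (by simp) x) (hft.differentiable (by simp) x) i,
      pd_sub (hft.differentiable (by simp) x) (hpt.differentiable (by simp) x) i]
    ring
  -- time derivative of u's i-th coordinate
  have hDt' : HasDerivAt (fun τ => G x τ)
      (fderiv ℝ (fun q : E n × ℝ => G q.1 q.2) (x, t) (0, 1)) t := tslice_hasDerivAt hG x t
  have hDtval : fderiv ℝ (fun q : E n × ℝ => G q.1 q.2) (x, t) (0, 1)
      = (∑ k, pd n (pd n (fun y => G y t) k) k x) + F x t * G x t :=
    hDt'.deriv.symm.trans (hheat x t ht htT)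
  have hPslice : ∀ τ, pd n (fun z => G z τ) i x
      = fderiv ℝ (fun q : E n × ℝ => G q.1 q.2) (x, τ) (EuclideanSpace.single i 1, 0) := by
    intro τ
    have h1 := (slice_hasFDerivAt hG τ x).fderiv
    rw [pd, h1]
    rfl
  have hPder : HasDerivAt (fun τ => pd n (fun z => G z τ) i x)
      (fderiv ℝ (fderiv ℝ (fun q : E n × ℝ => G q.1 q.2)) (x, t) (0, 1)
        (EuclideanSpace.single i 1, 0)) t := by
    have e : (fun τ => pd n (fun z => G z τ) i x)
        = fun τ => fderiv ℝ (fun q : E n × ℝ => G q.1 q.2) (x, τ)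
            (EuclideanSpace.single i 1, 0) := funext hPslice
    rw [e]
    exact mixed_hasDerivAt hG x t _
  have hMval : fderiv ℝ (fderiv ℝ (fun q : E n × ℝ => G q.1 q.2)) (x, t) (0, 1)
        (EuclideanSpace.single i 1, 0)
      = (∑ k, pd n (pd n (pd n (fun y => G y t) k) k) i x)
        + (pd n (fun y => F y t) i x * G x t + F x t * pd n (fun y => G y t) i x) := by
    rw [joint_symm hG (x, t) (0, 1) (EuclideanSpace.single i 1, 0)]
    have h2 := (mixed_hasFDerivAt hG x t ((0 : E n), (1 : ℝ))).fderiv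
    have h3 : fderiv ℝ (fderiv ℝ (fun q : E n × ℝ => G q.1 q.2)) (x, t)
          (EuclideanSpace.single i 1, 0) (0, 1)
        = pd n (fun y => fderiv ℝ (fun q : E n × ℝ => G q.1 q.2) (y, t) (0, 1)) i x := by
      rw [pd, h2]
      rfl
    rw [h3]
    have h4 : (fun y => fderiv ℝ (fun q : E n × ℝ => G q.1 q.2) (y, t) (0, 1))
        = fun y => lap n (fun z => G z t) y + F y t * G y t := by
      funext y
      rw [← (tslice_hasDerivAt hG y t).deriv]
      exact hheat y t ht htT
    rw [h4]
    have hlapD : ContDiff ℝ (⊤ : ℕ∞) (fun y => lap n (fun z => G z t) y) := by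
      have e5 : (fun y => lap n (fun z => G z t) y)
          = fun y => ∑ k, pd n (pd n (fun z => G z t) k) k y := rfl
      rw [e5]
      exact ContDiff.sum fun k _ => hgg k k
    rw [pd_add (hlapD.differentiable (by simp) x) ((hFt.mul hGt).differentiable (by simp) x) i]
    congr 1
    · have e5 : (fun y => lap n (fun z => G z t) y)
          = fun y => ∑ k, pd n (pd n (fun z => G z t) k) k y := rfl
      rw [e5, pd_sum (fun k _ => (hgg k k).differentiable (by simp) x) i]
    · exact pd_mul (hFt.differentiable (by simp) x) (hGt.differentiable (by simp) x) i
  have hderiv : deriv (fun τ => u x τ i) t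
      = ((-2) * ((∑ k, pd n (pd n (pd n (fun y => G y t) k) k) i x)
            + (pd n (fun y => F y t) i x * G x t + F x t * pd n (fun y => G y t) i x)) * G x t
          - (-2) * pd n (fun y => G y t) i x
            * ((∑ k, pd n (pd n (fun y => G y t) k) k x) + F x t * G x t)) / (G x t) ^ 2 := by
    have e : (fun τ => u x τ i) = fun τ => (-2) * pd n (fun z => G z τ) i x / G x τ :=
      funext fun τ => hukey i x τ
    rw [e, ((HasDerivAt.const_mul (-2 : ℝ) hPder).fun_div hDt' (hGne x t)).deriv, hMval, hDtval]
  -- assemble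
  rw [lap, hderiv, hconv, hlap, hforce]
  have hQ := hGne x t
  field_simp
  ring
end
end

section
/- Let n ≥ 1, T > 0, M > 0. The heat kernel on ℝⁿ is K(x,t) = (4πt)^{−n/2} exp(−|x|²/(4t)) for t > 0. Let F : ℝⁿ × [0,T] → ℝ be measurable with |F(x,t)| ≤ M for all (x,t), and let G₀ : ℝⁿ → ℝ be measurable and nonnegative-integrable against Gaussians, i.e. (K(·,t)∗|G₀|)(x) < ∞ for every x ∈ ℝⁿ, t ∈ (0,T]. Define the convolution series terms G⁽⁰⁾(x,t) = (K(·,t)∗G₀)(x) and G⁽ᵏ⁺¹⁾(x,t) = ∫₀ᵗ (K(·,t−s)∗(F(·,s)·G⁽ᵏ⁾(·,s)))(x) ds. Then for every fixed (x,t) ∈ ℝⁿ × (0,T] the series Σ_{k≥0} G⁽ᵏ⁾(x,t) converges absolutely, and its sum G satisfies |G(x,t)| ≤ e^{Mt}·(K(·,t)∗|G₀|)(x). -/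
/-!
By induction on `k`, `|G⁽ᵏ⁾(x,t)| ≤ (M t)ᵏ / k! · (K(·,t) ∗ |G₀|)(x)`. In the inductive step
`|F| ≤ M` and the bound at time `s` are pushed through `K(·,t-s) ∗ ·`; the semigroup identity
`K(·,t-s) ∗ K(·,s) = K(·,t)` (completing the square in a Gaussian integral, then Tonelli) turns
the result into `M (M s)ᵏ / k! · (K(·,t) ∗ |G₀|)(x)`, and `∫₀ᵗ sᵏ ds = tᵏ⁺¹/(k+1)`. Summing the
exponential series gives absolute convergence and the factor `e^{Mt}`.
-/

open MeasureTheory Real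

noncomputable section

open scoped RealInnerProductSpace

section Gaussian

variable {V : Type*} [NormedAddCommGroup V] [InnerProductSpace ℝ V] [FiniteDimensional ℝ V]
  [MeasurableSpace V] [BorelSpace V]

theorem integrable_rexp_neg_mul_sq_norm {b : ℝ} (hb : 0 < b) :
    Integrable fun v : V => rexp (-b * ‖v‖ ^ 2) := by
  refine Integrable.of_integral_ne_zero ?_
  rw [GaussianFourier.integral_rexp_neg_mul_sq_norm hb]
  exact (rpow_pos_of_pos (div_pos pi_pos hb) _).ne'

end Gaussian

theorem abs_intervalIntegral_le_of_abs_le_mul_pow {f : ℝ → ℝ} {C t : ℝ} {k : ℕ}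
    (ht : 0 ≤ t) (hf : ∀ s ∈ Set.Ioo 0 t, |f s| ≤ C * s ^ k) :
    |∫ s in (0 : ℝ)..t, f s| ≤ C * t ^ (k + 1) / (k + 1) := by
  have hbound : ∀ᵐ s, s ∈ Set.Ioc 0 t → ‖f s‖ ≤ C * s ^ k := by
    filter_upwards [Measure.ae_ne volume t] with s hst hs
    exact hf s ⟨hs.1, lt_of_le_of_ne hs.2 hst⟩
  calc |∫ s in (0 : ℝ)..t, f s| ≤ ∫ s in (0 : ℝ)..t, C * s ^ k :=
        intervalIntegral.norm_integral_le_of_norm_le ht hbound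
          ((continuous_const.mul (continuous_pow k)).intervalIntegrable _ _)
    _ = C * t ^ (k + 1) / (k + 1) := by
        rw [intervalIntegral.integral_const_mul, integral_pow]
        ring

theorem summable_abs_and_abs_tsum_le_exp_mul {a : ℕ → ℝ} {c B : ℝ}
    (ha : ∀ k, |a k| ≤ c ^ k / k.factorial * B) :
    Summable (fun k => |a k|) ∧ |∑' k, a k| ≤ rexp c * B := by
  have hexp : HasSum (fun k => c ^ k / k.factorial * B) (rexp c * B) := by
    rw [exp_eq_exp_ℝ]
    exact (NormedSpace.expSeries_div_hasSum_exp c).mul_right B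
  have hsum : Summable fun k => |a k| :=
    Summable.of_nonneg_of_le (fun k => abs_nonneg _) ha hexp.summable
  refine ⟨hsum, ?_⟩
  calc |∑' k, a k| ≤ ∑' k, |a k| := norm_tsum_le_tsum_norm (f := a) hsum
    _ ≤ rexp c * B := hasSum_le ha hsum.hasSum hexp

section HeatKernel

variable {n : ℕ}

theorem heatK_pos {t : ℝ} (ht : 0 < t) (x : E n) : 0 < heatK n x t :=
  mul_pos (rpow_pos_of_pos (by positivity) _) (exp_pos _)

theorem continuous_heatK (t : ℝ) : Continuous fun x : E n => heatK n x t := by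
  unfold heatK
  fun_prop

theorem heatK_sub_mul_heatK {s t : ℝ} (hs : 0 < s) (ht : 0 < t) (u w : E n) :
    heatK n (u - w) t * heatK n w s
      = (4 * π * t) ^ (-(n : ℝ) / 2) * (4 * π * s) ^ (-(n : ℝ) / 2)
        * rexp (-‖u‖ ^ 2 / (4 * (t + s)))
        * rexp (-((t + s) / (4 * t * s)) * ‖w - (s / (t + s)) • u‖ ^ 2) := by
  have hexp : -‖u - w‖ ^ 2 / (4 * t) + -‖w‖ ^ 2 / (4 * s)
      = -‖u‖ ^ 2 / (4 * (t + s))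
        + -((t + s) / (4 * t * s)) * ‖w - (s / (t + s)) • u‖ ^ 2 := by
    rw [norm_sub_sq_real, norm_sub_sq_real, real_inner_smul_right, norm_smul, mul_pow,
      real_inner_comm, norm_of_nonneg (by positivity : 0 ≤ s / (t + s))]
    field_simp
    ring
  unfold heatK
  rw [mul_mul_mul_comm, ← exp_add, hexp, exp_add]
  ring

theorem integrable_heatK_sub_mul_heatK {s t : ℝ} (hs : 0 < s) (ht : 0 < t) (u : E n) :
    Integrable fun w : E n => heatK n (u - w) t * heatK n w s := by
  simp_rw [heatK_sub_mul_heatK hs ht]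
  exact ((integrable_rexp_neg_mul_sq_norm (by positivity)).comp_sub_right _).const_mul _

theorem integral_heatK_sub_mul_heatK {s t : ℝ} (hs : 0 < s) (ht : 0 < t) (u : E n) :
    ∫ w : E n, heatK n (u - w) t * heatK n w s = heatK n u (t + s) := by
  simp_rw [heatK_sub_mul_heatK hs ht]
  rw [integral_const_mul,
    integral_sub_right_eq_self (fun w : E n => rexp (-((t + s) / (4 * t * s)) * ‖w‖ ^ 2)),
    GaussianFourier.integral_rexp_neg_mul_sq_norm (by positivity), finrank_euclideanSpace_fin]
  have hbase : (4 * π * t)⁻¹ * (4 * π * s)⁻¹ * (π / ((t + s) / (4 * t * s)))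
      = (4 * π * (t + s))⁻¹ := by
    field_simp
  have hconst : (4 * π * t) ^ (-(n : ℝ) / 2) * (4 * π * s) ^ (-(n : ℝ) / 2)
      * (π / ((t + s) / (4 * t * s))) ^ ((n : ℝ) / 2)
      = (4 * π * (t + s)) ^ (-(n : ℝ) / 2) := by
    rw [neg_div, rpow_neg (by positivity), rpow_neg (by positivity), rpow_neg (by positivity),
      ← inv_rpow (by positivity), ← inv_rpow (by positivity), ← inv_rpow (by positivity),
      ← mul_rpow (by positivity) (by positivity), ← mul_rpow (by positivity) (by positivity),
      hbase]
  unfold heatK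
  rw [← hconst]
  ring

theorem lintegral_heatK_sub_mul_heatK_sub {s t : ℝ} (hs : 0 < s) (ht : 0 < t) (x z : E n) :
    ∫⁻ y, ENNReal.ofReal (heatK n (x - y) t) * ENNReal.ofReal (heatK n (y - z) s)
      = ENNReal.ofReal (heatK n (x - z) (t + s)) := by
  rw [← lintegral_add_right_eq_self _ z]
  simp_rw [← ENNReal.ofReal_mul (heatK_pos ht _).le, add_sub_cancel_right,
    show ∀ y, x - (y + z) = x - z - y from fun y => by abel]
  rw [← ofReal_integral_eq_lintegral_ofReal (integrable_heatK_sub_mul_heatK hs ht _)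
    (ae_of_all _ fun y => mul_nonneg (heatK_pos ht _).le (heatK_pos hs _).le),
    integral_heatK_sub_mul_heatK hs ht]

theorem conv_heatK_nonneg {g : E n → ℝ} (hg0 : 0 ≤ g) {t : ℝ} (ht : 0 < t) (x : E n) :
    0 ≤ conv n (fun y => heatK n y t) g x :=
  integral_nonneg fun y => mul_nonneg (heatK_pos ht _).le (hg0 y)

theorem conv_const_mul (f g : E n → ℝ) (c : ℝ) (x : E n) :
    conv n f (fun y => c * g y) x = c * conv n f g x := by
  unfold conv
  rw [← integral_const_mul]
  congr 1 with y
  ring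

theorem conv_heatK_conv_heatK {g : E n → ℝ} (hg : Measurable g) (hg0 : 0 ≤ g) {s t : ℝ}
    (hs : 0 < s) (ht : 0 < t) {x : E n}
    (hgs : ∀ y, Integrable fun z => heatK n (y - z) s * g z)
    (hgts : Integrable fun z => heatK n (x - z) (t + s) * g z) :
    (Integrable fun y => heatK n (x - y) t * conv n (fun y => heatK n y s) g y) ∧
      conv n (fun y => heatK n y t) (conv n (fun y => heatK n y s) g) x
        = conv n (fun y => heatK n y (t + s)) g x := by
  set H := conv n (fun y => heatK n y s) g
  have hK : ∀ τ : ℝ, Measurable fun p : E n × E n => heatK n (p.1 - p.2) τ := fun τ =>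
    ((continuous_heatK τ).comp (continuous_fst.sub continuous_snd)).measurable
  have hH : Measurable H :=
    ((hK s).mul (hg.comp measurable_snd)).stronglyMeasurable.integral_prod_right'.measurable
  have hfm : Measurable fun y => heatK n (x - y) t * H y :=
    ((continuous_heatK t).comp (continuous_const.sub continuous_id)).measurable.mul hH
  have hfnn : ∀ y, 0 ≤ heatK n (x - y) t * H y := fun y =>
    mul_nonneg (heatK_pos ht _).le (conv_heatK_nonneg hg0 hs y)
  have hlint : ∫⁻ y, ENNReal.ofReal (heatK n (x - y) t * H y)
      = ENNReal.ofReal (conv n (fun y => heatK n y (t + s)) g x) := by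
    have hHlint : ∀ y, ENNReal.ofReal (H y)
        = ∫⁻ z, ENNReal.ofReal (heatK n (y - z) s) * ENNReal.ofReal (g z) := fun y => by
      simp_rw [← ENNReal.ofReal_mul (heatK_pos hs _).le]
      exact ofReal_integral_eq_lintegral_ofReal (hgs y)
        (ae_of_all _ fun z => mul_nonneg (heatK_pos hs _).le (hg0 z))
    calc ∫⁻ y, ENNReal.ofReal (heatK n (x - y) t * H y)
        = ∫⁻ y, ∫⁻ z, ENNReal.ofReal (heatK n (x - y) t)
            * (ENNReal.ofReal (heatK n (y - z) s) * ENNReal.ofReal (g z)) := by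
          refine lintegral_congr fun y => ?_
          rw [ENNReal.ofReal_mul (heatK_pos ht _).le, hHlint,
            lintegral_const_mul' _ _ ENNReal.ofReal_ne_top]
      _ = ∫⁻ z, (∫⁻ y, ENNReal.ofReal (heatK n (x - y) t)
              * ENNReal.ofReal (heatK n (y - z) s)) * ENNReal.ofReal (g z) := by
          rw [lintegral_lintegral_swap ((ENNReal.measurable_ofReal.comp
            ((continuous_heatK t).comp (continuous_const.sub continuous_fst)).measurable).mul
            ((ENNReal.measurable_ofReal.comp (hK s)).mul
              (ENNReal.measurable_ofReal.comp (hg.comp measurable_snd)))).aemeasurable]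
          simp_rw [← mul_assoc]
          exact lintegral_congr fun z => lintegral_mul_const' _ _ ENNReal.ofReal_ne_top
      _ = ENNReal.ofReal (conv n (fun y => heatK n y (t + s)) g x) := by
          simp_rw [lintegral_heatK_sub_mul_heatK_sub hs ht,
            ← ENNReal.ofReal_mul (heatK_pos (add_pos ht hs) _).le]
          exact (ofReal_integral_eq_lintegral_ofReal hgts
            (ae_of_all _ fun z => mul_nonneg (heatK_pos (add_pos ht hs) _).le (hg0 z))).symm
  refine ⟨⟨hfm.aestronglyMeasurable, ?_⟩, ?_⟩
  · rw [hasFiniteIntegral_iff_ofReal (ae_of_all _ hfnn), hlint]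
    exact ENNReal.ofReal_lt_top
  · rw [conv, integral_eq_lintegral_of_nonneg_ae (ae_of_all _ hfnn) hfm.aestronglyMeasurable,
      hlint, ENNReal.toReal_ofReal (conv_heatK_nonneg hg0 (add_pos ht hs) x)]

theorem abs_conv_heatK_le {f g : E n → ℝ} {t : ℝ} (ht : 0 < t) {x : E n}
    (hfg : ∀ y, |f y| ≤ g y) (hg : Integrable fun y => heatK n (x - y) t * g y) :
    |conv n (fun y => heatK n y t) f x| ≤ conv n (fun y => heatK n y t) g x := by
  unfold conv
  rw [← norm_eq_abs]
  refine norm_integral_le_of_norm_le hg (ae_of_all _ fun y => ?_)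
  rw [norm_mul, norm_of_nonneg (heatK_pos ht _).le, norm_eq_abs]
  exact mul_le_mul_of_nonneg_left (hfg y) (heatK_pos ht _).le

theorem abs_duhamelIterate_le {T M : ℝ} {F : E n → ℝ → ℝ}
    (hFb : ∀ (x : E n), ∀ t ∈ Set.Icc 0 T, |F x t| ≤ M)
    {G₀ : E n → ℝ} (hG₀m : Measurable G₀)
    (hG₀int : ∀ (x : E n), ∀ t ∈ Set.Ioc 0 T,
      Integrable fun y => heatK n (x - y) t * |G₀ y|)
    {Gk : ℕ → E n → ℝ → ℝ}
    (hGk0 : ∀ x t, Gk 0 x t = conv n (fun y => heatK n y t) G₀ x)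
    (hGkS : ∀ k x t, Gk (k + 1) x t
      = ∫ s in (0:ℝ)..t, conv n (fun y => heatK n y (t - s)) (fun y => F y s * Gk k y s) x)
    (k : ℕ) (x : E n) {t : ℝ} (ht : t ∈ Set.Ioc 0 T) :
    |Gk k x t|
      ≤ (M * t) ^ k / k.factorial * conv n (fun y => heatK n y t) (fun y => |G₀ y|) x := by
  set H := fun τ => conv n (fun y => heatK n y τ) (fun y => |G₀ y|)
  induction k generalizing x t with
  | zero =>
    rw [hGk0]
    simpa only [pow_zero, Nat.factorial_zero, Nat.cast_one, div_one, one_mul]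
      using abs_conv_heatK_le ht.1 (fun y => le_rfl) (hG₀int x t ht)
  | succ k ih =>
    obtain ⟨ht0, htT⟩ := ht
    have hstep : ∀ s ∈ Set.Ioo 0 t,
        |conv n (fun y => heatK n y (t - s)) (fun y => F y s * Gk k y s) x|
          ≤ M ^ (k + 1) / k.factorial * H t x * s ^ k := by
      rintro s ⟨hs, hst⟩
      have hsT : s ∈ Set.Ioc 0 T := ⟨hs, hst.le.trans htT⟩
      obtain ⟨hint, hsemi⟩ := conv_heatK_conv_heatK hG₀m.abs (fun _ => abs_nonneg _) hs
        (sub_pos.2 hst) (fun y => hG₀int y s hsT)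
        (by rw [sub_add_cancel]; exact hG₀int x t ⟨ht0, htT⟩)
      rw [sub_add_cancel] at hsemi
      set c := M * ((M * s) ^ k / k.factorial)
      have hbound : ∀ y, |F y s * Gk k y s| ≤ c * H s y := fun y => by
        have hF := hFb y s ⟨hs.le, hst.le.trans htT⟩
        rw [abs_mul, mul_assoc]
        exact mul_le_mul hF (ih y hsT) (abs_nonneg _) ((abs_nonneg _).trans hF)
      calc |conv n (fun y => heatK n y (t - s)) (fun y => F y s * Gk k y s) x|
          ≤ conv n (fun y => heatK n y (t - s)) (fun y => c * H s y) x :=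
            abs_conv_heatK_le (sub_pos.2 hst) hbound
              ((hint.const_mul c).congr (ae_of_all _ fun y => mul_left_comm _ _ _))
        _ = M ^ (k + 1) / k.factorial * H t x * s ^ k := by
            rw [conv_const_mul, hsemi]
            ring
    rw [hGkS]
    calc |∫ s in (0:ℝ)..t, conv n (fun y => heatK n y (t - s)) (fun y => F y s * Gk k y s) x|
        ≤ M ^ (k + 1) / k.factorial * H t x * t ^ (k + 1) / (k + 1) :=
          abs_intervalIntegral_le_of_abs_le_mul_pow ht0.le hstep
      _ = (M * t) ^ (k + 1) / (k + 1).factorial * H t x := by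
          rw [Nat.factorial_succ]
          push_cast
          field_simp
          ring

end HeatKernel

theorem stmt5_general (n : ℕ) (T M : ℝ)
    (F : E n → ℝ → ℝ)
    (hFb : ∀ (x : E n), ∀ t ∈ Set.Icc 0 T, |F x t| ≤ M)
    (G₀ : E n → ℝ) (hG₀m : Measurable G₀)
    (hG₀int : ∀ (x : E n), ∀ t ∈ Set.Ioc 0 T,
      MeasureTheory.Integrable (fun y => heatK n (x - y) t * |G₀ y|))
    (Gk : ℕ → E n → ℝ → ℝ)
    (hGk0 : ∀ x t, Gk 0 x t = conv n (fun y => heatK n y t) G₀ x)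
    (hGkS : ∀ k x t, Gk (k + 1) x t
      = ∫ s in (0:ℝ)..t, conv n (fun y => heatK n y (t - s)) (fun y => F y s * Gk k y s) x) :
    ∀ (x : E n), ∀ t ∈ Set.Ioc 0 T,
      Summable (fun k => |Gk k x t|) ∧
      |∑' k, Gk k x t|
        ≤ Real.exp (M * t) * conv n (fun y => heatK n y t) (fun y => |G₀ y|) x := by
  intro x t ht
  exact summable_abs_and_abs_tsum_le_exp_mul fun k =>
    abs_duhamelIterate_le hFb hG₀m hG₀int hGk0 hGkS k x ht

/-- absolute convergence of the convolution series and the fundamental bound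
|G(x,t)| <= exp(M t) * (K(.,t) * |G0|)(x), for a potential F bounded by M and initial
data G0 whose Gaussian convolutions are finite. -/
theorem stmt5 (n : ℕ) (hn : 1 ≤ n) (T M : ℝ) (hT : 0 < T) (hM : 0 < M)
    (F : E n → ℝ → ℝ) (hFm : Measurable fun q : E n × ℝ => F q.1 q.2)
    (hFb : ∀ (x : E n), ∀ t ∈ Set.Icc 0 T, |F x t| ≤ M)
    (G₀ : E n → ℝ) (hG₀m : Measurable G₀)
    (hG₀int : ∀ (x : E n), ∀ t ∈ Set.Ioc 0 T,
      MeasureTheory.Integrable (fun y => heatK n (x - y) t * |G₀ y|))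
    (Gk : ℕ → E n → ℝ → ℝ)
    (hGk0 : ∀ x t, Gk 0 x t = conv n (fun y => heatK n y t) G₀ x)
    (hGkS : ∀ k x t, Gk (k + 1) x t
      = ∫ s in (0:ℝ)..t, conv n (fun y => heatK n y (t - s)) (fun y => F y s * Gk k y s) x) :
    ∀ (x : E n), ∀ t ∈ Set.Ioc 0 T,
      Summable (fun k => |Gk k x t|) ∧
      |∑' k, Gk k x t|
        ≤ Real.exp (M * t) * conv n (fun y => heatK n y t) (fun y => |G₀ y|) x :=
  stmt5_general n T M F hFb G₀ hG₀m hG₀int Gk hGk0 hGkS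
end
end
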